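/- arXiv:2604.21364 — 4 statements merged into one kernel-verified Lean document; each statement's English description precedes it below -/
import Mathlib

section
/- Let X : [0,∞) × [-1,1]² → ℝ be a C² function (i.e., the restriction of a C² function defined on an open neighborhood of [0,∞) × [-1,1]²), and define A(h) := sup_{t ≥ 0} X(t,h) for h ∈ (-1,1)². Assume: (i) there exists a unique T₀ ∈ [0,∞) such that A(0) = X(T₀,0) > 0; (ii) if T₀ > 0 then ∂²X/∂t²(T₀,0) ≠ 0, while if T₀ = 0 then ∂X/∂t(0,0) ≠ 0; (iii) for every ε > 0 there exists C > 0 such that |X(t,u)| ≤ ε for all u ∈ [-1,1]² and all t ≥ C. Then there exist an open subset V ⊆ (-1,1)² containing 0 and a C¹ map T : V → [0,∞) such that A(h) = X(T(h),h) for every h ∈ V; moreover, the map h ↦ A(h) is differentiable at h = 0 and ∇A(0) = ∇ₕX(T₀,0), where ∇ₕX denotes the gradient of X in the h-variables. -/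
/-!
If `T₀ = 0`, the non-degeneracy `∂ₜX(0,0) < 0` persists near `(0,0)`, so `t ↦ X(t,h)` decreases on
a window `[0,δ)` and `T ≡ 0`. If `T₀ > 0`, then `∂ₜX(T₀,0) = 0` and `∂ₜ²X(T₀,0) < 0`; the implicit
function theorem applied to `∂ₜX` yields a `C¹` critical point `T(h)`, which maximises the concave
function `X(·,h)` on a window around `T₀`. Outside the window, compactness of the remaining bounded
times and the uniform decay keep `X(·,h)` below `X(T₀,h)` for `h` near `0`, so `T(h)` is the
global maximiser. Finally `X(T₀,h) - X(T₀,0) ≤ A h - A 0 ≤ X(T h,h) - X(T h,0)`, and strict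
differentiability of `X` at `(T₀,0)` makes both bounds `∇ₕX(T₀,0) h + o(h)`.
-/

open Set Filter Topology

lemma antitoneOn_of_hasDerivAt_nonpos {f f' : ℝ → ℝ} {D : Set ℝ} (hD : Convex ℝ D)
    (hf : ∀ x ∈ D, HasDerivAt f (f' x) x) (hf' : ∀ x ∈ D, f' x ≤ 0) : AntitoneOn f D :=
  antitoneOn_of_hasDerivWithinAt_nonpos hD (fun x hx ↦ (hf x hx).continuousAt.continuousWithinAt)
    (fun x hx ↦ (hf x (interior_subset hx)).hasDerivWithinAt) fun x hx ↦ hf' x (interior_subset hx)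

lemma monotoneOn_of_hasDerivAt_nonneg {f f' : ℝ → ℝ} {D : Set ℝ} (hD : Convex ℝ D)
    (hf : ∀ x ∈ D, HasDerivAt f (f' x) x) (hf' : ∀ x ∈ D, 0 ≤ f' x) : MonotoneOn f D :=
  monotoneOn_of_hasDerivWithinAt_nonneg hD (fun x hx ↦ (hf x hx).continuousAt.continuousWithinAt)
    (fun x hx ↦ (hf x (interior_subset hx)).hasDerivWithinAt) fun x hx ↦ hf' x (interior_subset hx)

lemma isMaxOn_of_hasDerivAt_of_antitoneOn {f f' : ℝ → ℝ} {I : Set ℝ} {s : ℝ} [I.OrdConnected]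
    (hf : ∀ t ∈ I, HasDerivAt f (f' t) t) (hf' : AntitoneOn f' I) (hs : s ∈ I) (hs₀ : f' s = 0) :
    IsMaxOn f I s := by
  refine isMaxOn_iff.2 fun t ht ↦ ?_
  rcases le_total t s with hts | hst
  · have hsub : Icc t s ⊆ I := Set.OrdConnected.out' ht hs
    exact monotoneOn_of_hasDerivAt_nonneg (convex_Icc t s) (fun x hx ↦ hf x (hsub hx))
      (fun x hx ↦ hs₀ ▸ hf' (hsub hx) hs hx.2) ⟨le_rfl, hts⟩ ⟨hts, le_rfl⟩ hts
  · have hsub : Icc s t ⊆ I := Set.OrdConnected.out' hs ht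
    exact antitoneOn_of_hasDerivAt_nonpos (convex_Icc s t) (fun x hx ↦ hf x (hsub hx))
      (fun x hx ↦ hs₀ ▸ hf' hs (hsub hx) hx.1) ⟨le_rfl, hst⟩ ⟨hst, le_rfl⟩ hst

lemma HasDerivAt.nonpos_of_isMaxOn_Ici {f : ℝ → ℝ} {a d : ℝ} (hf : HasDerivAt f d a)
    (hmax : IsMaxOn f (Ici a) a) : d ≤ 0 := by
  have hone : (1 : ℝ) ∈ posTangentConeAt (Ici a) a :=
    mem_posTangentConeAt_of_segment_subset (by simp [segment_eq_Icc, Icc_subset_Ici_self])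
  simpa using hmax.localize.hasFDerivWithinAt_nonpos hf.hasFDerivAt.hasFDerivWithinAt hone

lemma IsLocalMax.deriv_deriv_nonpos {f : ℝ → ℝ} {a : ℝ} (hmax : IsLocalMax f a)
    (hf : ContinuousAt f a) : deriv (deriv f) a ≤ 0 := by
  by_contra! hpos
  have hconst : f =ᶠ[𝓝 a] fun _ ↦ f a :=
    ((isLocalMin_of_deriv_deriv_pos hpos hmax.deriv_eq_zero hf).and hmax).mono
      fun x hx ↦ le_antisymm hx.2 hx.1
  have hderiv : deriv f =ᶠ[𝓝 a] fun _ ↦ 0 := hconst.deriv.mono fun x hx ↦ by simp [hx]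
  simp [hderiv.deriv_eq] at hpos

/-- An unbounded supremum in `ℝ` is `0` by convention, so `f t₀ ≠ 0` forces boundedness. -/
lemma isMaxOn_of_ciSup_eq_of_ne_zero {α : Type*} {f : α → ℝ} {s : Set α} {t₀ : α}
    (hsup : ⨆ t : s, f t = f t₀) (hne : f t₀ ≠ 0) : IsMaxOn f s t₀ := by
  have hbdd : BddAbove (range fun t : s ↦ f t) := by
    by_contra hunb
    exact hne (hsup ▸ Real.iSup_of_not_bddAbove hunb)
  exact isMaxOn_iff.2 fun t ht ↦ hsup ▸ le_ciSup hbdd ⟨t, ht⟩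

lemma IsMaxOn.of_inter_of_forall_lt {α β : Type*} [Preorder β] {f : α → β} {s w : Set α}
    {a b : α} (hmax : IsMaxOn f (s ∩ w) a) (hb : b ∈ s ∩ w) (hlt : ∀ t ∈ s, t ∉ w → f t < f b) :
    IsMaxOn f s a := by
  refine isMaxOn_iff.2 fun t ht ↦ ?_
  by_cases htw : t ∈ w
  · exact hmax ⟨ht, htw⟩
  · exact (hlt t ht htw).le.trans (hmax hb)

lemma ContDiffAt.exists_isOpen_contDiffOn_forall {E F : Type*} [NormedAddCommGroup E]
    [NormedSpace ℝ E] [NormedAddCommGroup F] [NormedSpace ℝ F] {T : E → F} {x₀ : E} {n : ℕ}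
    (hT : ContDiffAt ℝ n T x₀) {P : E → Prop} (hP : ∀ᶠ x in 𝓝 x₀, P x) :
    ∃ V : Set E, IsOpen V ∧ x₀ ∈ V ∧ ContDiffOn ℝ n T V ∧ ∀ x ∈ V, P x := by
  obtain ⟨u, hu, hTu⟩ := hT.contDiffOn le_rfl (by simp)
  exact ⟨interior ({x | P x} ∩ u), isOpen_interior, mem_interior_iff_mem_nhds.2 (inter_mem hP hu),
    hTu.mono fun x hx ↦ (interior_subset hx).2, fun x hx ↦ (interior_subset hx).1⟩

lemma Asymptotics.IsLittleO.squeeze {α F : Type*} [Norm F] {l : Filter α} {f g u : α → ℝ}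
    {k : α → F} (hf : f =o[l] k) (hg : g =o[l] k) (hfu : ∀ᶠ x in l, f x ≤ u x)
    (hug : ∀ᶠ x in l, u x ≤ g x) : u =o[l] k := by
  refine (IsBigO.of_bound' ?_).trans_isLittleO (hf.norm_left.add hg.norm_left)
  filter_upwards [hfu, hug] with x hfx hgx
  simp only [Real.norm_eq_abs]
  refine (abs_le.2 ⟨?_, ?_⟩).trans (le_abs_self _)
  · linarith [neg_abs_le (f x), abs_nonneg (g x)]
  · linarith [le_abs_self (g x), abs_nonneg (f x)]

lemma Filter.Eventually.exists_pos_forall_Ioo {E : Type*} [TopologicalSpace E]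
    {P : ℝ × E → Prop} {t₀ : ℝ} {x₀ : E} (h : ∀ᶠ p in 𝓝 (t₀, x₀), P p) :
    ∃ δ > 0, ∀ᶠ x in 𝓝 x₀, ∀ t ∈ Ioo (t₀ - δ) (t₀ + δ), P (t, x) := by
  rw [nhds_prod_eq, eventually_prod_iff] at h
  obtain ⟨pt, hpt, px, hpx, hP⟩ := h
  obtain ⟨δ, hδ, hδpt⟩ := Metric.eventually_nhds_iff.1 hpt
  exact ⟨δ, hδ, hpx.mono fun x hx t ht ↦ hP (hδpt (by rwa [← Real.ball_eq_Ioo] at ht)) hx⟩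

theorem eventually_forall_lt_of_strictMax_of_decay {E : Type*} [TopologicalSpace E]
    {f : ℝ × E → ℝ} {x₀ : E} {t₀ C c δ : ℝ} (ht₀ : 0 ≤ t₀) (hδ : 0 < δ)
    (hf : ∀ t ≥ 0, ContinuousAt f (t, x₀))
    (hmax : ∀ t ≥ 0, t ≠ t₀ → f (t, x₀) < f (t₀, x₀)) (hc : c < f (t₀, x₀))
    (hdecay : ∀ᶠ x in 𝓝 x₀, ∀ t ≥ C, f (t, x) ≤ c) :
    ∀ᶠ x in 𝓝 x₀, ∀ t ≥ 0, t ∉ Ioo (t₀ - δ) (t₀ + δ) → f (t, x) < f (t₀, x) := by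
  have hf₀ : ContinuousAt (fun x ↦ f (t₀, x)) x₀ :=
    (hf t₀ ht₀).comp (continuous_const.prodMk continuous_id).continuousAt
  have hK : ∀ᶠ x in 𝓝 x₀, ∀ t ∈ Icc 0 C \ Ioo (t₀ - δ) (t₀ + δ), f (t, x) < f (t₀, x) := by
    refine (isCompact_Icc.diff isOpen_Ioo).eventually_forall_of_forall_eventually fun t ht ↦ ?_
    have hne : t ≠ t₀ := by rintro rfl; exact ht.2 ⟨by linarith, by linarith⟩
    have hswap : ContinuousAt (fun z : E × ℝ ↦ f (z.2, z.1)) (x₀, t) :=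
      (hf t ht.1.1).comp_of_eq continuous_swap.continuousAt rfl
    have hfst : ContinuousAt (fun z : E × ℝ ↦ f (t₀, z.1)) (x₀, t) :=
      hf₀.comp_of_eq continuousAt_fst rfl
    exact hswap.eventually_lt hfst (hmax t ht.1.1 hne)
  filter_upwards [hK, hdecay, continuousAt_const.eventually_lt hf₀ hc]
    with x hKx hdecayx hcx t ht htδ
  rcases le_total t C with htC | hCt
  · exact hKx t ⟨⟨ht, htC⟩, htδ⟩
  · exact (hdecayx t hCt).trans_lt hcx

section

variable {E : Type*} [NormedAddCommGroup E] [NormedSpace ℝ E]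

theorem HasStrictFDerivAt.hasFDerivAt_envelope {X : ℝ × E → ℝ} {L : ℝ × E →L[ℝ] ℝ}
    {T : E → ℝ} {S : Set ℝ} {x₀ : E} (hX : HasStrictFDerivAt X L (T x₀, x₀))
    (hT : ContinuousAt T x₀) (hS : ∀ᶠ x in 𝓝 x₀, T x ∈ S ∧ IsMaxOn (fun t ↦ X (t, x)) S (T x)) :
    HasFDerivAt (fun x ↦ X (T x, x)) (L ∘L .inr ℝ ℝ E) x₀ := by
  -- Strict differentiability compares points sharing a time `s`, uniformly in `s` near `T x₀`.
  have hsection : (fun q : ℝ × E ↦ X (q.1, q.2) - X (q.1, x₀) - L (0, q.2 - x₀))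
      =o[𝓝 (T x₀, x₀)] fun q ↦ q.2 - x₀ := by
    have hpair : Tendsto (fun q : ℝ × E ↦ ((q.1, q.2), (q.1, x₀))) (𝓝 (T x₀, x₀))
        (𝓝 ((T x₀, x₀), (T x₀, x₀))) :=
      ((continuous_fst.prodMk continuous_snd).prodMk
        (continuous_fst.prodMk continuous_const)).tendsto' _ _ rfl
    refine ((hasStrictFDerivAt_iff_isLittleO.1 hX).comp_tendsto hpair).congr'
      (.of_forall fun q ↦ ?_) (g₂ := fun q ↦ ((0 : ℝ), q.2 - x₀)) (.of_forall fun q ↦ ?_)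
      |>.trans_isBigO (Asymptotics.isBigO_of_le _ fun q ↦ ?_)
    · simp only [Function.comp_apply, Prod.mk_sub_mk, sub_self]
    · simp only [Function.comp_apply, Prod.mk_sub_mk, sub_self]
    · simp
  have hS₀ := hS.self_of_nhds
  refine .of_isLittleO <| Asymptotics.IsLittleO.squeeze
    (hsection.comp_tendsto ((tendsto_const_nhds (x := T x₀)).prodMk_nhds tendsto_id))
    (hsection.comp_tendsto (hT.tendsto.prodMk_nhds tendsto_id)) ?_ ?_
  · filter_upwards [hS] with x ⟨_, hmaxx⟩
    have := isMaxOn_iff.1 hmaxx _ hS₀.1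
    simp only [Function.comp_apply, id, ContinuousLinearMap.comp_apply,
      ContinuousLinearMap.inr_apply]
    linarith
  · filter_upwards [hS] with x ⟨hTx, _⟩
    have := isMaxOn_iff.1 hS₀.2 _ hTx
    simp only [Function.comp_apply, id, ContinuousLinearMap.comp_apply,
      ContinuousLinearMap.inr_apply]
    linarith

/-- `∂F/∂t`, for `F` a function of `(t, x)`. -/
noncomputable def partialFst (F : ℝ × E → ℝ) (p : ℝ × E) : ℝ := fderiv ℝ F p (1, 0)

lemma hasDerivAt_partialFst {F : ℝ × E → ℝ} {t : ℝ} {x : E} (hF : DifferentiableAt ℝ F (t, x)) :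
    HasDerivAt (fun s ↦ F (s, x)) (partialFst F (t, x)) t :=
  hF.hasFDerivAt.comp_hasDerivAt t ((hasDerivAt_id t).prodMk (hasDerivAt_const t x))

lemma ContDiffAt.contDiffAt_partialFst {F : ℝ × E → ℝ} {p : ℝ × E} {n : ℕ}
    (hF : ContDiffAt ℝ (n + 1) F p) : ContDiffAt ℝ n (partialFst F) p :=
  (hF.fderiv_right le_rfl).clm_apply contDiffAt_const

lemma ContDiffAt.deriv_deriv_eq_partialFst_partialFst {F : ℝ × E → ℝ} {t : ℝ} {x : E}
    (hF : ContDiffAt ℝ 2 F (t, x)) :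
    deriv (deriv fun s ↦ F (s, x)) t = partialFst (partialFst F) (t, x) := by
  have hslice : ∀ᶠ s in 𝓝 t, ContDiffAt ℝ 2 F (s, x) :=
    (continuous_id.prodMk continuous_const).continuousAt.eventually (hF.eventually (by simp))
  have heq : deriv (fun s ↦ F (s, x)) =ᶠ[𝓝 t] fun s ↦ partialFst F (s, x) :=
    hslice.mono fun s hs ↦ (hasDerivAt_partialFst (hs.differentiableAt two_ne_zero)).deriv
  rw [heq.deriv_eq]
  exact (hasDerivAt_partialFst
    ((hF.contDiffAt_partialFst (n := 1)).differentiableAt one_ne_zero)).deriv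

lemma ContinuousLinearMap.isInvertible_of_apply_one_ne_zero {f : ℝ →L[ℝ] ℝ} (hf : f 1 ≠ 0) :
    f.IsInvertible := by
  refine .of_inverse (g := (f 1)⁻¹ • .id ℝ ℝ) ?_ ?_ <;> ext <;> simp [hf]

theorem ContDiffAt.exists_implicitFunction_fst [CompleteSpace E] {G : ℝ × E → ℝ} {t₀ : ℝ}
    {x₀ : E} (hG : ContDiffAt ℝ 1 G (t₀, x₀)) (hG' : partialFst G (t₀, x₀) ≠ 0) :
    ∃ T : E → ℝ, ContDiffAt ℝ 1 T x₀ ∧ T x₀ = t₀ ∧ ∀ᶠ x in 𝓝 x₀, G (T x, x) = G (t₀, x₀) := by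
  -- Mathlib's implicit function solves for the second variable, hence the swap.
  set swap : (E × ℝ) ≃L[ℝ] (ℝ × E) := ContinuousLinearEquiv.prodComm ℝ E ℝ
  have hswap : ContDiffAt ℝ 1 (G ∘ swap) (x₀, t₀) := hG.comp (x₀, t₀) swap.contDiff.contDiffAt
  have hderiv : fderiv ℝ (G ∘ swap) (x₀, t₀) =
      fderiv ℝ G (t₀, x₀) ∘L (swap : (E × ℝ) →L[ℝ] (ℝ × E)) :=
    ((hG.differentiableAt one_ne_zero).hasFDerivAt.comp (x₀, t₀) swap.hasFDerivAt).fderiv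
  have hinv : (fderiv ℝ (G ∘ swap) (x₀, t₀) ∘L .inr ℝ E ℝ).IsInvertible :=
    ContinuousLinearMap.isInvertible_of_apply_one_ne_zero
      (by simpa [hderiv, swap, partialFst] using hG')
  exact ⟨hswap.implicitFunction one_ne_zero hinv, hswap.contDiffAt_implicitFunction _ _,
    hswap.implicitFunction_apply_self _ _, hswap.eventually_apply_implicitFunction one_ne_zero hinv⟩

theorem ContDiffAt.exists_antitoneOn_of_partialFst_neg {X : ℝ × E → ℝ} {t₀ : ℝ} {x₀ : E}
    (hX : ContDiffAt ℝ 1 X (t₀, x₀)) (hneg : partialFst X (t₀, x₀) < 0) :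
    ∃ δ > 0, ∀ᶠ x in 𝓝 x₀, AntitoneOn (fun t ↦ X (t, x)) (Ioo (t₀ - δ) (t₀ + δ)) := by
  have hev : ∀ᶠ p in 𝓝 (t₀, x₀),
      HasDerivAt (fun t ↦ X (t, p.2)) (partialFst X p) p.1 ∧ partialFst X p < 0 := by
    filter_upwards [hX.eventually (by simp),
      (hX.contDiffAt_partialFst (n := 0)).continuousAt.eventually_lt continuousAt_const hneg]
      with p hXp hnegp
    exact ⟨hasDerivAt_partialFst (hXp.differentiableAt one_ne_zero), hnegp⟩
  obtain ⟨δ, hδ, hbox⟩ := hev.exists_pos_forall_Ioo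
  exact ⟨δ, hδ, hbox.mono fun x hx ↦ antitoneOn_of_hasDerivAt_nonpos (convex_Ioo _ _)
    (fun t ht ↦ (hx t ht).1) fun t ht ↦ (hx t ht).2.le⟩

theorem ContDiffAt.exists_isMaxOn_of_partialFst_eq_zero [CompleteSpace E] {X : ℝ × E → ℝ}
    {t₀ : ℝ} {x₀ : E} (hX : ContDiffAt ℝ 2 X (t₀, x₀)) (hcrit : partialFst X (t₀, x₀) = 0)
    (hneg : partialFst (partialFst X) (t₀, x₀) < 0) :
    ∃ T : E → ℝ, ContDiffAt ℝ 1 T x₀ ∧ T x₀ = t₀ ∧ ∃ δ > 0,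
      ∀ᶠ x in 𝓝 x₀, IsMaxOn (fun t ↦ X (t, x)) (Ioo (t₀ - δ) (t₀ + δ)) (T x) := by
  have hG : ContDiffAt ℝ 1 (partialFst X) (t₀, x₀) := hX.contDiffAt_partialFst
  obtain ⟨T, hT, hT₀, hTcrit⟩ := hG.exists_implicitFunction_fst hneg.ne
  obtain ⟨δ, hδ, hanti⟩ := hG.exists_antitoneOn_of_partialFst_neg hneg
  have hderiv : ∀ᶠ p in 𝓝 (t₀, x₀), HasDerivAt (fun t ↦ X (t, p.2)) (partialFst X p) p.1 :=
    (hX.eventually (by simp)).mono fun p hp ↦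
      hasDerivAt_partialFst (hp.differentiableAt two_ne_zero)
  obtain ⟨δ', hδ', hbox⟩ := hderiv.exists_pos_forall_Ioo
  set ε := min δ δ'
  have hεδ : Ioo (t₀ - ε) (t₀ + ε) ⊆ Ioo (t₀ - δ) (t₀ + δ) := by gcongr <;> exact min_le_left ..
  have hεδ' : Ioo (t₀ - ε) (t₀ + ε) ⊆ Ioo (t₀ - δ') (t₀ + δ') := by
    gcongr <;> exact min_le_right ..
  have hε : 0 < ε := lt_min hδ hδ'
  have hTε : ∀ᶠ x in 𝓝 x₀, T x ∈ Ioo (t₀ - ε) (t₀ + ε) :=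
    hT.continuousAt.eventually_mem (hT₀ ▸ Ioo_mem_nhds (by linarith) (by linarith))
  refine ⟨T, hT, hT₀, ε, hε, ?_⟩
  filter_upwards [hanti, hbox, hTcrit, hTε] with x hantix hboxx hcritx hTx
  exact isMaxOn_of_hasDerivAt_of_antitoneOn (fun t ht ↦ hboxx t (hεδ' ht)) (hantix.mono hεδ) hTx
    (hcritx.trans hcrit)

theorem ContDiffAt.exists_isMaxOn_of_isMaxOn_Ici [CompleteSpace E] {X : ℝ × E → ℝ} {t₀ : ℝ}
    {x₀ : E} (hX : ContDiffAt ℝ 2 X (t₀, x₀)) (ht₀ : 0 ≤ t₀)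
    (hmax : IsMaxOn (fun t ↦ X (t, x₀)) (Ici 0) t₀)
    (hnd1 : 0 < t₀ → deriv (deriv fun t ↦ X (t, x₀)) t₀ ≠ 0)
    (hnd2 : t₀ = 0 → deriv (fun t ↦ X (t, x₀)) 0 ≠ 0) :
    ∃ T : E → ℝ, ContDiffAt ℝ 1 T x₀ ∧ T x₀ = t₀ ∧ ∃ δ > 0, ∀ᶠ x in 𝓝 x₀,
      0 ≤ T x ∧ IsMaxOn (fun t ↦ X (t, x)) (Ici 0 ∩ Ioo (t₀ - δ) (t₀ + δ)) (T x) := by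
  have hslice := hasDerivAt_partialFst (hX.differentiableAt two_ne_zero)
  rcases ht₀.eq_or_lt with rfl | hpos
  · have hneg : partialFst X (0, x₀) < 0 :=
      (hslice.nonpos_of_isMaxOn_Ici hmax).lt_of_ne (hslice.deriv ▸ hnd2 rfl)
    obtain ⟨δ, hδ, hanti⟩ := (hX.of_le one_le_two).exists_antitoneOn_of_partialFst_neg hneg
    refine ⟨fun _ ↦ 0, contDiffAt_const, rfl, δ, hδ, hanti.mono fun x hx ↦ ⟨le_rfl, ?_⟩⟩
    exact isMaxOn_iff.2 fun t ht ↦ hx ⟨by linarith, by linarith⟩ ht.2 ht.1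
  · have hloc : IsLocalMax (fun t ↦ X (t, x₀)) t₀ := hmax.isLocalMax (Ici_mem_nhds hpos)
    have hcrit : partialFst X (t₀, x₀) = 0 := hslice.deriv ▸ hloc.deriv_eq_zero
    have hneg : partialFst (partialFst X) (t₀, x₀) < 0 := by
      rw [← hX.deriv_deriv_eq_partialFst_partialFst]
      exact (hloc.deriv_deriv_nonpos hslice.continuousAt).lt_of_ne (hnd1 hpos)
    obtain ⟨T, hT, hT₀, δ, hδ, hmaxT⟩ := hX.exists_isMaxOn_of_partialFst_eq_zero hcrit hneg
    have hTpos : ∀ᶠ x in 𝓝 x₀, 0 < T x := hT.continuousAt.eventually_const_lt (hT₀ ▸ hpos)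
    exact ⟨T, hT, hT₀, δ, hδ, (hTpos.and hmaxT).mono fun x hx ↦
      ⟨hx.1.le, hx.2.on_subset inter_subset_right⟩⟩

end

/-- **Maximum-tracking lemma.**
`X : [0,∞) × [-1,1]² → ℝ` is `C²` (restriction of a `C²` function on an open
neighborhood `O` of `[0,∞) × [-1,1]²`), and `A h = sup_{t ≥ 0} X (t, h)`.
Under the stated non-degeneracy and decay assumptions, there is an open set
`V ⊆ (-1,1)²` containing `0` and a `C¹` map `T : V → [0,∞)` tracking the
maximizer, and `A` is differentiable at `0` with `∇A(0) = ∇ₕX(T₀,0)`. -/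
theorem max_tracking
    (X : ℝ × (ℝ × ℝ) → ℝ) (O : Set (ℝ × (ℝ × ℝ)))
    (hO : IsOpen O)
    (hdom : (Ici (0:ℝ)) ×ˢ ((Icc (-1:ℝ) 1) ×ˢ (Icc (-1:ℝ) 1)) ⊆ O)
    (hX : ContDiffOn ℝ 2 X O)
    (A : ℝ × ℝ → ℝ)
    (hA : ∀ h : ℝ × ℝ, A h = ⨆ t : Ici (0:ℝ), X (↑t, h))
    (T₀ : ℝ) (hT₀ : 0 ≤ T₀)
    (hmax : A 0 = X (T₀, 0))
    (hpos : 0 < X (T₀, 0))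
    (huniq : ∀ t : ℝ, 0 ≤ t → A 0 = X (t, 0) → t = T₀)
    (hnd1 : 0 < T₀ → deriv (deriv (fun t : ℝ => X (t, 0))) T₀ ≠ 0)
    (hnd2 : T₀ = 0 → deriv (fun t : ℝ => X (t, 0)) 0 ≠ 0)
    (hdecay : ∀ ε > (0:ℝ), ∃ C > (0:ℝ), ∀ u ∈ (Icc (-1:ℝ) 1) ×ˢ (Icc (-1:ℝ) 1),
      ∀ t ≥ C, |X (t, u)| ≤ ε) :
    ∃ V : Set (ℝ × ℝ), IsOpen V ∧ (0:ℝ × ℝ) ∈ V ∧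
      V ⊆ (Ioo (-1:ℝ) 1) ×ˢ (Ioo (-1:ℝ) 1) ∧
      (∃ T : ℝ × ℝ → ℝ, ContDiffOn ℝ 1 T V ∧
        ∀ h ∈ V, 0 ≤ T h ∧ A h = X (T h, h)) ∧
      HasFDerivAt A (fderiv ℝ (fun h : ℝ × ℝ => X (T₀, h)) 0) 0 := by
  have hIoo : Ioo (-1 : ℝ) 1 ∈ 𝓝 0 := Ioo_mem_nhds (by norm_num) (by norm_num)
  have hsquare : Ioo (-1 : ℝ) 1 ×ˢ Ioo (-1 : ℝ) 1 ∈ 𝓝 (0 : ℝ × ℝ) := prod_mem_nhds hIoo hIoo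
  have hsquareIcc : Icc (-1 : ℝ) 1 ×ˢ Icc (-1 : ℝ) 1 ∈ 𝓝 (0 : ℝ × ℝ) :=
    mem_of_superset hsquare (prod_mono Ioo_subset_Icc_self Ioo_subset_Icc_self)
  have hXat : ∀ t ≥ 0, ContDiffAt ℝ 2 X (t, 0) := fun t ht ↦
    hX.contDiffAt (hO.mem_nhds (hdom ⟨ht, mem_of_mem_nhds hsquareIcc⟩))
  have hmax₀ : IsMaxOn (fun t ↦ X (t, 0)) (Ici 0) T₀ :=
    isMaxOn_of_ciSup_eq_of_ne_zero ((hA 0).symm.trans hmax) hpos.ne'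
  have hstrict : ∀ t ≥ 0, t ≠ T₀ → X (t, 0) < X (T₀, 0) := fun t ht hne ↦
    (isMaxOn_iff.1 hmax₀ t ht).lt_of_ne fun heq ↦ hne (huniq t ht (hmax.trans heq.symm))
  obtain ⟨C, -, hC⟩ := hdecay (X (T₀, 0) / 2) (by positivity)
  obtain ⟨T, hT, hT₀', δ, hδ, hloc⟩ :=
    (hXat T₀ hT₀).exists_isMaxOn_of_isMaxOn_Ici hT₀ hmax₀ hnd1 hnd2
  have hgap := eventually_forall_lt_of_strictMax_of_decay hT₀ hδ
    (fun t ht ↦ (hXat t ht).continuousAt) hstrict (half_lt_self hpos)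
    (eventually_of_mem hsquareIcc fun h hh t ht ↦ (le_abs_self _).trans (hC h hh t ht))
  have htrack : ∀ᶠ h in 𝓝 0, 0 ≤ T h ∧ IsMaxOn (fun t ↦ X (t, h)) (Ici 0) (T h) := by
    filter_upwards [hloc, hgap] with h ⟨hTh, hmaxh⟩ hgaph
    exact ⟨hTh, hmaxh.of_inter_of_forall_lt ⟨hT₀, by constructor <;> linarith⟩ hgaph⟩
  have hAT : ∀ᶠ h in 𝓝 0, 0 ≤ T h ∧ A h = X (T h, h) :=
    htrack.mono fun h hh ↦ ⟨hh.1, (hA h).trans (hh.2.iSup_eq hh.1)⟩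
  obtain ⟨V, hVopen, hV₀, hTV, hVsq⟩ := hT.exists_isOpen_contDiffOn_forall (inter_mem hsquare hAT)
  refine ⟨V, hVopen, hV₀, fun h hh ↦ (hVsq h hh).1, ⟨T, hTV, fun h hh ↦ (hVsq h hh).2⟩, ?_⟩
  have hXT₀ := (hXat T₀ hT₀).hasStrictFDerivAt two_ne_zero
  rw [← hT₀'] at hXT₀ ⊢
  have hslice : HasFDerivAt (fun h : ℝ × ℝ ↦ X (T 0, h)) (fderiv ℝ X (T 0, 0) ∘L .inr ℝ ℝ _) 0 :=
    hXT₀.hasFDerivAt.comp 0 (hasFDerivAt_prodMk_right _ _)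
  rw [hslice.fderiv]
  exact (hXT₀.hasFDerivAt_envelope hT.continuousAt htrack).congr_of_eventuallyEq
    (hAT.mono fun h hh ↦ hh.2)
end

section
/- Let X : [0,∞) × [-1,1]² → ℝ be a C² function (the restriction of a C² function on an open neighborhood) and define A(h) := sup_{t ≥ 0} X(t,h). Assume: (i) T₀ = 0 is the unique point of [0,∞) with A(0) = X(0,0) > 0; (ii) ∂X/∂t(0,0) ≠ 0; (iii) for every ε > 0 there exists C > 0 such that |X(t,u)| ≤ ε for all u ∈ [-1,1]² and all t ≥ C. Then there exists an open set V ⊆ (-1,1)² containing 0 such that A(h) = X(0,h) for every h ∈ V; in particular A is differentiable at 0 with ∇A(0) = ∇ₕX(0,0), where ∇ₕX denotes the gradient of X in the h-variables. -/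
open Set

open Filter Topology

/-- **Maximum-tracking lemma, boundary case `T₀ = 0`.**
`X : [0,∞) × [-1,1]² → ℝ` is `C²` (restriction of a `C²` function on an open
neighborhood `O`), `A h = sup_{t ≥ 0} X (t, h)`.  If `T₀ = 0` is the unique
maximizer for `h = 0`, with `A 0 = X (0,0) > 0` and `∂X/∂t(0,0) ≠ 0`, and `X`
decays uniformly at infinity, then `A h = X (0, h)` on an open neighborhood
`V` of `0`; in particular `A` is differentiable at `0` with
`∇A(0) = ∇ₕX(0,0)`. -/
theorem max_tracking_boundary_case
    (X : ℝ × (ℝ × ℝ) → ℝ) (O : Set (ℝ × (ℝ × ℝ)))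
    (hO : IsOpen O)
    (hdom : (Ici (0:ℝ)) ×ˢ ((Icc (-1:ℝ) 1) ×ˢ (Icc (-1:ℝ) 1)) ⊆ O)
    (hX : ContDiffOn ℝ 2 X O)
    (A : ℝ × ℝ → ℝ)
    (hA : ∀ h : ℝ × ℝ, A h = ⨆ t : Ici (0:ℝ), X (↑t, h))
    (hmax : A 0 = X (0, 0))
    (hpos : 0 < X (0, 0))
    (huniq : ∀ t : ℝ, 0 ≤ t → A 0 = X (t, 0) → t = 0)
    (hnd : deriv (fun t : ℝ => X (t, 0)) 0 ≠ 0)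
    (hdecay : ∀ ε > (0:ℝ), ∃ C > (0:ℝ), ∀ u ∈ (Icc (-1:ℝ) 1) ×ˢ (Icc (-1:ℝ) 1),
      ∀ t ≥ C, |X (t, u)| ≤ ε) :
    ∃ V : Set (ℝ × ℝ), IsOpen V ∧ (0:ℝ × ℝ) ∈ V ∧
      V ⊆ (Ioo (-1:ℝ) 1) ×ˢ (Ioo (-1:ℝ) 1) ∧
      (∀ h ∈ V, A h = X (0, h)) ∧
      HasFDerivAt A (fderiv ℝ (fun h : ℝ × ℝ => X (0, h)) 0) 0 := by
  classical
  set box : Set (ℝ × ℝ) := (Icc (-1:ℝ) 1) ×ˢ (Icc (-1:ℝ) 1) with hbox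
  have h0box : ((0:ℝ×ℝ)) ∈ box := by
    constructor <;> simp
  have hp0 : ((0:ℝ), (0:ℝ×ℝ)) ∈ O := hdom ⟨mem_Ici.2 le_rfl, h0box⟩
  have hcont : ContinuousOn X O := hX.continuousOn
  -- boundedness of t ↦ X (t, h) for h in the box
  obtain ⟨C₁, hC₁pos, hC₁⟩ := hdecay 1 one_pos
  have hKsub : ∀ C : ℝ, (Icc (0:ℝ) C) ×ˢ box ⊆ O := by
    intro C
    refine Subset.trans ?_ hdom
    exact prod_mono (Icc_subset_Ici_self) (Subset.refl _)
  have hK1c : IsCompact ((Icc (0:ℝ) C₁) ×ˢ box) :=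
    isCompact_Icc.prod (isCompact_Icc.prod isCompact_Icc)
  obtain ⟨M, hM⟩ : ∃ M : ℝ, ∀ p ∈ (Icc (0:ℝ) C₁) ×ˢ box, X p ≤ M := by
    rcases (hK1c.image_of_continuousOn (hcont.mono (hKsub C₁))).bddAbove with ⟨M, hM⟩
    exact ⟨M, fun p hp => hM (mem_image_of_mem _ hp)⟩
  have hbdd : ∀ h ∈ box, BddAbove (range fun t : Ici (0:ℝ) => X (↑t, h)) := by
    intro h hh
    refine ⟨max M 1, ?_⟩
    rintro x ⟨⟨t, ht⟩, rfl⟩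
    by_cases htC : t ≤ C₁
    · exact le_max_of_le_left (hM (t, h) ⟨⟨ht, htC⟩, hh⟩)
    · exact le_max_of_le_right ((le_abs_self _).trans (hC₁ h hh t (le_of_not_ge htC)))
  -- X (t,0) ≤ X (0,0) for t ≥ 0
  have hle0 : ∀ t : ℝ, 0 ≤ t → X (t, 0) ≤ X (0, 0) := by
    intro t ht
    have := le_ciSup (hbdd 0 h0box) (⟨t, ht⟩ : Ici (0:ℝ))
    rw [← hA 0, hmax] at this
    exact this
  -- differentiability facts
  have hXdiff : ∀ p ∈ O, DifferentiableAt ℝ X p := fun p hp =>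
    ((hX.differentiableOn (by norm_num)).differentiableAt (hO.mem_nhds hp))
  set F : ℝ × (ℝ × ℝ) → ℝ := fun p => fderiv ℝ X p ((1:ℝ), (0:ℝ×ℝ)) with hF
  have hFcont : ContinuousOn F O := by
    have h1 := hX.continuousOn_fderiv_of_isOpen hO (by norm_num)
    exact h1.clm_apply continuousOn_const
  have hderiv : ∀ p ∈ O, HasDerivAt (fun t : ℝ => X (t, p.2)) (F p) p.1 := by
    intro p hp
    have h1 : HasFDerivAt X (fderiv ℝ X p) p := (hXdiff p hp).hasFDerivAt
    have h2 : HasDerivAt (fun t : ℝ => ((t, p.2) : ℝ × (ℝ × ℝ))) ((1:ℝ), (0:ℝ×ℝ)) p.1 :=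
      HasDerivAt.prodMk (hasDerivAt_id p.1) (hasDerivAt_const _ _)
    have h3 := h1.comp_hasDerivAt p.1 h2
    exact h3
  have hderiv0 : HasDerivAt (fun t : ℝ => X (t, 0)) (F ((0:ℝ), (0:ℝ×ℝ))) 0 :=
    hderiv ((0:ℝ), (0:ℝ×ℝ)) hp0
  -- the t-derivative at the origin is negative
  have hdneg : F ((0:ℝ), (0:ℝ×ℝ)) < 0 := by
    have hne : F ((0:ℝ), (0:ℝ×ℝ)) ≠ 0 := by rw [← hderiv0.deriv]; exact hnd
    rcases lt_or_gt_of_ne hne with h | h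
    · exact h
    exfalso
    have hmaxOn : IsLocalMaxOn (fun t : ℝ => X (t, 0)) (Ici (0:ℝ)) 0 :=
      Filter.eventually_of_mem self_mem_nhdsWithin (fun t ht => hle0 t ht)
    have hcone : (1:ℝ) ∈ posTangentConeAt (Ici (0:ℝ)) 0 := by
      have := sub_mem_posTangentConeAt_of_segment_subset
        (x := (0:ℝ)) (y := 1) (s := Ici (0:ℝ)) (by
          rw [segment_eq_Icc zero_le_one]; exact Icc_subset_Ici_self)
      simpa using this
    have := hmaxOn.hasFDerivWithinAt_nonpos hderiv0.hasDerivWithinAt hcone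
    simp only [ContinuousLinearMap.smulRight_apply, ContinuousLinearMap.one_apply,
      one_smul, ContinuousLinearMap.toSpanSingleton_apply, smul_eq_mul, mul_one] at this
    linarith
  -- neighborhood where the t-derivative stays negative
  have hFat : ContinuousAt F ((0:ℝ), (0:ℝ×ℝ)) := hFcont.continuousAt (hO.mem_nhds hp0)
  have hUmem : {p | F p < F ((0:ℝ), (0:ℝ×ℝ)) / 2} ∩ O ∈ 𝓝 ((0:ℝ), (0:ℝ×ℝ)) := by
    refine Filter.inter_mem ?_ (hO.mem_nhds hp0)
    exact hFat (Iio_mem_nhds (by linarith))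
  obtain ⟨r, hrpos, hrball⟩ := Metric.mem_nhds_iff.1 hUmem
  -- the second decay constant
  obtain ⟨C₂, hC₂pos, hC₂⟩ := hdecay (X (0, 0) / 4) (by linarith)
  set δ : ℝ := min (r / 2) C₂ with hδ
  have hδpos : 0 < δ := lt_min (by linarith) hC₂pos
  have hδC₂ : δ ≤ C₂ := min_le_right _ _
  have hδr : δ ≤ r / 2 := min_le_left _ _
  -- points (t,h) with t ∈ [0,δ], ‖h‖ < r/2 are in the good ball
  have hball : ∀ h : ℝ × ℝ, ‖h‖ < r / 2 → ∀ t ∈ Icc (0:ℝ) δ,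
      ((t, h) : ℝ × (ℝ × ℝ)) ∈ Metric.ball ((0:ℝ), (0:ℝ×ℝ)) r := by
    intro h hh t ht
    rw [Metric.mem_ball, Prod.dist_eq]
    rw [max_lt_iff]
    constructor
    · rw [Real.dist_eq]
      rw [abs_of_nonneg (by simpa using ht.1)]
      simpa using lt_of_le_of_lt ht.2 (lt_of_le_of_lt hδr (by linarith))
    · rw [dist_zero_right]; linarith
  have hanti : ∀ h : ℝ × ℝ, ‖h‖ < r / 2 → StrictAntiOn (fun t : ℝ => X (t, h)) (Icc 0 δ) := by
    intro h hh
    have hmemO : ∀ t ∈ Icc (0:ℝ) δ, ((t, h) : ℝ × (ℝ × ℝ)) ∈ O := by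
      intro t ht
      exact (hrball (hball h hh t ht)).2
    refine strictAntiOn_of_deriv_neg (convex_Icc _ _) ?_ ?_
    · have : ContinuousOn (fun t : ℝ => ((t, h) : ℝ × (ℝ × ℝ))) (Icc 0 δ) :=
        (continuous_id.prodMk continuous_const).continuousOn
      exact hcont.comp this hmemO
    · intro t ht
      rw [interior_Icc] at ht
      have htO : ((t, h) : ℝ × (ℝ × ℝ)) ∈ O := hmemO t ⟨le_of_lt ht.1, le_of_lt ht.2⟩
      have hd := hderiv ((t, h) : ℝ × (ℝ × ℝ)) htO
      rw [hd.deriv]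
      have := (hrball (hball h hh t ⟨le_of_lt ht.1, le_of_lt ht.2⟩)).1
      have h2 : F ((t, h) : ℝ × (ℝ × ℝ)) < F ((0:ℝ), (0:ℝ×ℝ)) / 2 := this
      linarith
  -- margin on [δ, C₂]
  obtain ⟨t₀, ht₀mem, ht₀max⟩ : ∃ t₀ ∈ Icc δ C₂, ∀ t ∈ Icc δ C₂, X (t, 0) ≤ X (t₀, 0) := by
    have hc : ContinuousOn (fun t : ℝ => X (t, 0)) (Icc δ C₂) := by
      have hsub : ∀ t ∈ Icc δ C₂, ((t, (0:ℝ×ℝ)) : ℝ × (ℝ × ℝ)) ∈ O := by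
        intro t ht
        exact hdom ⟨le_trans (le_of_lt hδpos) ht.1, h0box⟩
      exact hcont.comp ((continuous_id.prodMk continuous_const).continuousOn) hsub
    obtain ⟨t₀, h1, h2⟩ := isCompact_Icc.exists_isMaxOn (nonempty_Icc.2 hδC₂) hc
    exact ⟨t₀, h1, fun t ht => h2 ht⟩
  have hη : 0 < X (0, 0) - X (t₀, 0) := by
    rcases lt_or_eq_of_le (hle0 t₀ (le_trans (le_of_lt hδpos) ht₀mem.1)) with h | h
    · linarith
    · exfalso
      have := huniq t₀ (le_trans (le_of_lt hδpos) ht₀mem.1) (by rw [hmax, h])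
      rw [this] at ht₀mem
      exact absurd ht₀mem.1 (not_le.2 hδpos)
  set η : ℝ := X (0, 0) - X (t₀, 0) with hηdef
  -- uniform continuity on the compact cylinder
  have hKc : IsCompact ((Icc (0:ℝ) C₂) ×ˢ box) :=
    isCompact_Icc.prod (isCompact_Icc.prod isCompact_Icc)
  have hucont := hKc.uniformContinuousOn_of_continuous (hcont.mono (hKsub C₂))
  rw [Metric.uniformContinuousOn_iff] at hucont
  set ε₀ : ℝ := min (η / 4) (X (0, 0) / 4) with hε₀def
  have hε₀pos : 0 < ε₀ := lt_min (by linarith) (by linarith)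
  obtain ⟨ρ, hρpos, hρ⟩ := hucont ε₀ hε₀pos
  -- the neighborhood V
  set a : ℝ := min (min (r / 2) ρ) 1 with ha
  have hapos : 0 < a := lt_min (lt_min (by linarith) hρpos) one_pos
  have ha1 : a ≤ 1 := min_le_right _ _
  have heq : ∀ h ∈ (Ioo (-a) a) ×ˢ (Ioo (-a) a), A h = X (0, h) := by
    intro h hh
    have hhbox : h ∈ box := ⟨⟨by linarith [hh.1.1], by linarith [hh.1.2]⟩,
      ⟨by linarith [hh.2.1], by linarith [hh.2.2]⟩⟩
    have hnorm : ‖h‖ < a := by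
      rw [Prod.norm_def, max_lt_iff]
      constructor <;> rw [Real.norm_eq_abs, abs_lt]
      · exact ⟨hh.1.1, hh.1.2⟩
      · exact ⟨hh.2.1, hh.2.2⟩
    have hnr : ‖h‖ < r / 2 := lt_of_lt_of_le hnorm ((min_le_left _ _).trans (min_le_left _ _))
    have hnρ : ‖h‖ < ρ := lt_of_lt_of_le hnorm ((min_le_left _ _).trans (min_le_right _ _))
    -- closeness of slices
    have hclose : ∀ t ∈ Icc (0:ℝ) C₂, |X (t, h) - X (t, 0)| < ε₀ := by
      intro t ht
      have h1 : ((t, h) : ℝ × (ℝ × ℝ)) ∈ (Icc (0:ℝ) C₂) ×ˢ box := ⟨ht, hhbox⟩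
      have h2 : ((t, (0:ℝ×ℝ)) : ℝ × (ℝ × ℝ)) ∈ (Icc (0:ℝ) C₂) ×ˢ box := ⟨ht, h0box⟩
      have hd : dist ((t, h) : ℝ × (ℝ × ℝ)) ((t, (0:ℝ×ℝ)) : ℝ × (ℝ × ℝ)) < ρ := by
        rw [Prod.dist_eq]
        simp only [dist_self, dist_zero_right]
        rw [max_lt_iff]
        exact ⟨hρpos, hnρ⟩
      have := hρ _ h1 _ h2 hd
      rwa [Real.dist_eq] at this
    have h0close : |X (0, h) - X (0, 0)| < ε₀ :=
      hclose 0 ⟨le_refl 0, le_of_lt hC₂pos⟩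
    have h0lower : X (0, 0) - ε₀ < X (0, h) := by
      have := abs_lt.1 h0close
      linarith [this.1]
    -- main estimate
    have hmain : ∀ t : ℝ, 0 ≤ t → X (t, h) ≤ X (0, h) := by
      intro t ht
      rcases le_or_gt t δ with h1 | h1
      · rcases eq_or_lt_of_le ht with h2 | h2
        · rw [← h2]
        · exact le_of_lt (hanti h hnr ⟨le_refl 0, le_of_lt hδpos⟩ ⟨ht, h1⟩ h2)
      rcases le_or_gt t C₂ with h2 | h2
      · -- δ < t ≤ C₂
        have hXt0 : X (t, 0) ≤ X (0, 0) - η := by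
          have := ht₀max t ⟨le_of_lt h1, h2⟩
          rw [hηdef]; linarith
        have h3 := abs_lt.1 (hclose t ⟨ht, h2⟩)
        have hε₀η : ε₀ ≤ η / 4 := min_le_left _ _
        linarith [h3.2]
      · -- t > C₂
        have h3 : |X (t, h)| ≤ X (0, 0) / 4 := hC₂ h hhbox t (le_of_lt h2)
        have h4 : X (t, h) ≤ X (0, 0) / 4 := (le_abs_self _).trans h3
        have hε₀q : ε₀ ≤ X (0, 0) / 4 := min_le_right _ _
        linarith
    rw [hA h]
    apply le_antisymm
    · exact ciSup_le (fun t => hmain t t.2)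
    · exact le_ciSup (hbdd h hhbox) (⟨0, mem_Ici.2 le_rfl⟩ : Ici (0:ℝ))
  refine ⟨(Ioo (-a) a) ×ˢ (Ioo (-a) a), (isOpen_Ioo.prod isOpen_Ioo), ?_, ?_, heq, ?_⟩
  · exact ⟨by constructor <;> simp [hapos], by constructor <;> simp [hapos]⟩
  · intro h hh
    exact ⟨⟨by linarith [hh.1.1], by linarith [hh.1.2]⟩,
      ⟨by linarith [hh.2.1], by linarith [hh.2.2]⟩⟩
  · -- differentiability of A at 0
    have hgd : DifferentiableAt ℝ (fun h : ℝ × ℝ => X (0, h)) 0 := by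
      have h1 : DifferentiableAt ℝ X ((0:ℝ), (0:ℝ×ℝ)) := hXdiff _ hp0
      have h2 : DifferentiableAt ℝ (fun h : ℝ × ℝ => (((0:ℝ), h) : ℝ × (ℝ × ℝ))) 0 :=
        DifferentiableAt.prodMk (differentiableAt_const _) differentiableAt_id
      exact h1.comp 0 h2
    refine hgd.hasFDerivAt.congr_of_eventuallyEq ?_
    have hV : (Ioo (-a) a) ×ˢ (Ioo (-a) a) ∈ 𝓝 (0 : ℝ × ℝ) :=
      (isOpen_Ioo.prod isOpen_Ioo).mem_nhds
        ⟨by constructor <;> simp [hapos], by constructor <;> simp [hapos]⟩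
    filter_upwards [hV] with h hh
    exact heq h hh
end

section
/- Let n ≥ 1, let K ⊆ ℝⁿ be compact, and let U ⊆ ℝⁿ be an open set containing K. Let (Ω, F, ℙ) be a probability space and let Φ : Ω × U → ℝ^{n+1} be such that for each t ∈ U the map ω ↦ Φ(ω,t) is measurable, and for ℙ-almost every ω the map t ↦ Φ(ω,t) is C¹ on U. Assume there exist constants M > 0 and r > 0 such that for every t ∈ K and every Borel set A contained in the open Euclidean ball of radius r centered at 0 in ℝ^{n+1}, one has ℙ(Φ(·,t) ∈ A) ≤ M · Leb_{n+1}(A), where Leb_{n+1} denotes Lebesgue measure on ℝ^{n+1}. Then for ℙ-almost every ω there exists no point t ∈ K such that Φ(ω,t) = 0. -/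
open MeasureTheory Set

set_option maxHeartbeats 1000000

private lemma no_zeros_aux_alg (n : ℕ) (v bn M L b1 ε : ℝ) (hbn : bn ≠ 0) (hε : ε ≠ 0) :
    (v / ((ε / 4) ^ n * bn)) * (M * ((2 * L * ε) ^ (n + 1) * b1)) =
      (v / bn * 4 ^ n * M * (2 * L) ^ (n + 1) * b1) * ε := by
  have h4 : (4 : ℝ) ^ n ≠ 0 := by positivity
  have hεn : ε ^ n ≠ 0 := pow_ne_zero _ hε
  rw [mul_pow, mul_pow, div_pow, pow_succ]
  field_simp
  ring

/-- **No zeros of an overdetermined random field (Adler–Taylor Lemma 11.2.10).**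
Let `K ⊆ ℝⁿ` be compact, `U ⊇ K` open, and let `Φ : Ω × U → ℝ^{n+1}` be a
random field, measurable in `ω` for each `t`, almost surely `C¹` in `t` on `U`.
If the laws of the `Φ(·,t)`, `t ∈ K`, are uniformly absolutely continuous on a
ball of radius `r` around `0 ∈ ℝ^{n+1}` with density bounded by `M`, then
almost surely `Φ(ω, ·)` has no zero in `K`. -/
theorem no_zeros_of_overdetermined_field
    {n : ℕ} (hn : 1 ≤ n)
    {Ω : Type*} [MeasurableSpace Ω] (ℙ : Measure Ω) [IsProbabilityMeasure ℙ]
    (K U : Set (EuclideanSpace ℝ (Fin n)))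
    (hK : IsCompact K) (hU : IsOpen U) (hKU : K ⊆ U)
    (Φ : Ω → EuclideanSpace ℝ (Fin n) → EuclideanSpace ℝ (Fin (n + 1)))
    (hmeas : ∀ t ∈ U, Measurable fun ω => Φ ω t)
    (hC1 : ∀ᵐ ω ∂ℙ, ContDiffOn ℝ 1 (Φ ω) U)
    (M r : ℝ) (hM : 0 < M) (hr : 0 < r)
    (hdens : ∀ t ∈ K, ∀ A : Set (EuclideanSpace ℝ (Fin (n + 1))),
      MeasurableSet A → A ⊆ Metric.ball 0 r →
      ℙ {ω | Φ ω t ∈ A} ≤ ENNReal.ofReal M * volume A) :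
    ∀ᵐ ω ∂ℙ, ∀ t ∈ K, Φ ω t ≠ 0 := by
  classical
  obtain ⟨δ, hδpos, hδU⟩ := hK.exists_cthickening_subset_open hU hKU
  set T : Set (EuclideanSpace ℝ (Fin n)) := Metric.cthickening δ K with hTdef
  have hTcomp : IsCompact T :=
    Metric.isCompact_of_isClosed_isBounded Metric.isClosed_cthickening hK.isBounded.cthickening
  have hTvol : volume T ≠ ⊤ := hTcomp.measure_lt_top.ne
  -- the bad events, stratified by a bound on the derivative
  set E : ℕ → Set Ω := fun L => {ω | ContDiffOn ℝ 1 (Φ ω) U ∧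
      (∀ x ∈ T, ‖fderiv ℝ (Φ ω) x‖ ≤ (L : ℝ)) ∧ ∃ t ∈ K, Φ ω t = 0} with hEdef
  have hEzero : ∀ L : ℕ, ℙ (E L) = 0 := by
    intro L
    set Bn : ENNReal := volume (Metric.ball (0 : EuclideanSpace ℝ (Fin n)) 1) with hBndef
    set B1 : ENNReal := volume (Metric.ball (0 : EuclideanSpace ℝ (Fin (n+1))) 1) with hB1def
    have hBnpos : 0 < Bn := Metric.measure_ball_pos _ _ one_pos
    have hBntop : Bn ≠ ⊤ := measure_ball_lt_top.ne
    have hB1top : B1 ≠ ⊤ := measure_ball_lt_top.ne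
    set bn : ℝ := Bn.toReal with hbndef
    set b1 : ℝ := B1.toReal with hb1def
    have hbnpos : 0 < bn := ENNReal.toReal_pos hBnpos.ne' hBntop
    have hb1nonneg : 0 ≤ b1 := ENNReal.toReal_nonneg
    set v : ℝ := (volume T).toReal with hvdef
    have hvnonneg : 0 ≤ v := ENNReal.toReal_nonneg
    set c₀ : ℝ := v / bn * 4 ^ n * M * (2 * L) ^ (n + 1) * b1 with hc₀def
    have hc₀ : 0 ≤ c₀ := by positivity
    have key : ∀ ε : ℝ, 0 < ε → ε ≤ δ / 2 → 2 * L * ε < r →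
        ℙ (E L) ≤ ENNReal.ofReal (c₀ * ε) := by
      intro ε hε hεδ hεr
      -- a finite ε-net of K
      obtain ⟨F0, hF0K, hF0fin, hF0cov⟩ :=
        Metric.finite_approx_of_totallyBounded hK.totallyBounded ε hε
      set F : Finset (EuclideanSpace ℝ (Fin n)) := hF0fin.toFinset with hFdef
      have hFK : ∀ x ∈ F, x ∈ K := fun x hx => hF0K (hF0fin.mem_toFinset.1 hx)
      -- a maximal ε-separated subset of the net
      obtain ⟨S, hSF, hSsep, hSnet⟩ : ∃ S ⊆ F,
          (∀ a ∈ S, ∀ b ∈ S, a ≠ b → ε ≤ dist a b) ∧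
          ∀ x ∈ F, ∃ s ∈ S, dist x s < ε := by
        obtain ⟨S, hSmem, hSmax⟩ := Finset.exists_max_image
          (F.powerset.filter (fun s => ∀ a ∈ s, ∀ b ∈ s, a ≠ b → ε ≤ dist a b))
          Finset.card
          ⟨∅, by simp⟩
        simp only [Finset.mem_filter, Finset.mem_powerset] at hSmem
        refine ⟨S, hSmem.1, hSmem.2, fun x hx => ?_⟩
        by_contra hcon
        push_neg at hcon
        have hxS : x ∉ S := fun hxS => absurd (hcon x hxS) (by simpa using hε)
        have hins : insert x S ∈ F.powerset.filter
            (fun s => ∀ a ∈ s, ∀ b ∈ s, a ≠ b → ε ≤ dist a b) := by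
          simp only [Finset.mem_filter, Finset.mem_powerset]
          refine ⟨Finset.insert_subset hx hSmem.1, ?_⟩
          intro a ha b hb hab
          rcases Finset.mem_insert.1 ha with h1 | haS
          · subst h1
            rcases Finset.mem_insert.1 hb with h2 | hbS
            · exact absurd h2.symm hab
            · exact hcon b hbS
          · rcases Finset.mem_insert.1 hb with h2 | hbS
            · subst h2
              rw [dist_comm]
              exact hcon a haS
            · exact hSmem.2 a haS b hbS hab
        have := hSmax _ hins
        rw [Finset.card_insert_of_notMem hxS] at this
        omega
      have hSK : ∀ s ∈ S, s ∈ K := fun s hs => hFK s (hSF hs)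
      -- the 2ε-balls around S cover K
      have hScov : ∀ t ∈ K, ∃ s ∈ S, dist t s < 2 * ε := by
        intro t ht
        obtain ⟨x, hxF0, htx⟩ := Set.mem_iUnion₂.1 (hF0cov ht)
        obtain ⟨s, hsS, hxs⟩ := hSnet x (hF0fin.mem_toFinset.2 hxF0)
        exact ⟨s, hsS, by
          have := dist_triangle t x s
          rw [Metric.mem_ball] at htx
          linarith⟩
      -- cardinality bound on S via disjoint balls
      have hcardR : (S.card : ℝ) ≤ v / ((ε / 4) ^ n * bn) := by
        have hdisj : (↑S : Set (EuclideanSpace ℝ (Fin n))).PairwiseDisjoint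
            (fun s => Metric.ball s (ε / 2)) := by
          intro a ha b hb hab
          refine Set.disjoint_left.2 fun x hxa hxb => ?_
          rw [Metric.mem_ball] at hxa hxb
          have := hSsep a (by simpa using ha) b (by simpa using hb) hab
          have := dist_triangle a x b
          rw [dist_comm a x] at this
          linarith
        have hsum : ∑ s ∈ S, volume (Metric.ball s (ε / 2)) ≤ volume T := by
          rw [← measure_biUnion_finset hdisj (fun _ _ => measurableSet_ball)]
          refine measure_mono ?_
          refine Set.iUnion₂_subset fun s hs => fun x hx => ?_
          refine Metric.mem_cthickening_of_dist_le x s δ K (hSK s hs) ?_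
          rw [Metric.mem_ball] at hx
          linarith
        have hballvol : ∀ s ∈ S, ENNReal.ofReal ((ε / 4) ^ n) * Bn ≤
            volume (Metric.ball s (ε / 2)) := by
          intro s _
          have h1 : volume (Metric.closedBall s (ε / 4)) =
              ENNReal.ofReal ((ε / 4) ^ n) * Bn := by
            rw [MeasureTheory.Measure.addHaar_closedBall volume s (by positivity),
              finrank_euclideanSpace_fin]
          rw [← h1]
          exact measure_mono (Metric.closedBall_subset_ball (by linarith))
        have hcount : (S.card : ENNReal) * (ENNReal.ofReal ((ε / 4) ^ n) * Bn) ≤ volume T := by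
          calc (S.card : ENNReal) * (ENNReal.ofReal ((ε / 4) ^ n) * Bn)
              = ∑ _s ∈ S, (ENNReal.ofReal ((ε / 4) ^ n) * Bn) := by
                rw [Finset.sum_const, nsmul_eq_mul]
            _ ≤ ∑ s ∈ S, volume (Metric.ball s (ε / 2)) := Finset.sum_le_sum hballvol
            _ ≤ volume T := hsum
        have := ENNReal.toReal_mono hTvol hcount
        rw [ENNReal.toReal_mul, ENNReal.toReal_mul, ENNReal.toReal_natCast,
          ENNReal.toReal_ofReal (by positivity)] at this
        rw [le_div_iff₀ (by positivity)]
        calc (S.card : ℝ) * ((ε / 4) ^ n * bn) ≤ (volume T).toReal := this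
          _ = v := rfl
      -- union bound: on E L, some Φ ω s is small
      have hEsub : E L ⊆ ⋃ s ∈ S, {ω | Φ ω s ∈ Metric.closedBall 0 (2 * L * ε)} := by
        rintro ω ⟨hc1, hLip, t, htK, ht0⟩
        obtain ⟨s, hsS, hst⟩ := hScov t htK
        refine Set.mem_iUnion₂.2 ⟨s, hsS, ?_⟩
        have hsegT : segment ℝ t s ⊆ T := by
          have hsub : segment ℝ t s ⊆ Metric.closedBall t (dist t s) :=
            (convex_closedBall t (dist t s)).segment_subset
              (Metric.mem_closedBall_self dist_nonneg)
              (by rw [Metric.mem_closedBall, dist_comm])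
          intro x hx
          refine Metric.mem_cthickening_of_dist_le x t δ K htK ?_
          have := hsub hx
          rw [Metric.mem_closedBall] at this
          have hcomm : dist t s = dist s t := dist_comm t s
          linarith
        have hderiv : ∀ x ∈ segment ℝ t s,
            HasFDerivWithinAt (Φ ω) (fderiv ℝ (Φ ω) x) (segment ℝ t s) x := by
          intro x hx
          have hxU : x ∈ U := hδU (hsegT hx)
          have : DifferentiableAt ℝ (Φ ω) x :=
            (hc1.differentiableOn one_ne_zero).differentiableAt (hU.mem_nhds hxU)
          exact this.hasFDerivAt.hasFDerivWithinAt
        have hbound : ∀ x ∈ segment ℝ t s, ‖fderiv ℝ (Φ ω) x‖ ≤ (L : ℝ) :=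
          fun x hx => hLip x (hsegT hx)
        have hmvt := (convex_segment t s).norm_image_sub_le_of_norm_hasFDerivWithin_le
          hderiv hbound (left_mem_segment ℝ t s) (right_mem_segment ℝ t s)
        rw [ht0, sub_zero] at hmvt
        simp only [Set.mem_setOf_eq, Metric.mem_closedBall, dist_zero_right]
        calc ‖Φ ω s‖ ≤ (L : ℝ) * ‖s - t‖ := hmvt
          _ ≤ (L : ℝ) * (2 * ε) := by
              refine mul_le_mul_of_nonneg_left ?_ (Nat.cast_nonneg L)
              rw [← dist_eq_norm, dist_comm]
              linarith
          _ = 2 * L * ε := by ring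
      -- probability of each small ball event
      have hballprob : ∀ s ∈ S, ℙ {ω | Φ ω s ∈ Metric.closedBall 0 (2 * L * ε)} ≤
          ENNReal.ofReal (M * ((2 * L * ε) ^ (n + 1) * b1)) := by
        intro s hs
        have h2 : volume (Metric.closedBall (0 : EuclideanSpace ℝ (Fin (n+1)))
            (2 * L * ε)) = ENNReal.ofReal ((2 * L * ε) ^ (n + 1)) * B1 := by
          rw [MeasureTheory.Measure.addHaar_closedBall volume _ (by positivity),
            finrank_euclideanSpace_fin]
        have := hdens s (hSK s hs) (Metric.closedBall 0 (2 * L * ε))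
          measurableSet_closedBall
          (fun x hx => by
            rw [Metric.mem_closedBall] at hx
            rw [Metric.mem_ball]
            exact lt_of_le_of_lt hx hεr)
        refine this.trans (le_of_eq ?_)
        rw [h2, ← ENNReal.ofReal_toReal hB1top,
          ← ENNReal.ofReal_mul (by positivity : (0:ℝ) ≤ (2 * (L:ℝ) * ε) ^ (n + 1)),
          ← ENNReal.ofReal_mul hM.le]
      -- put everything together
      calc ℙ (E L) ≤ ℙ (⋃ s ∈ S, {ω | Φ ω s ∈ Metric.closedBall 0 (2 * L * ε)}) :=
            measure_mono hEsub
        _ ≤ ∑ s ∈ S, ℙ {ω | Φ ω s ∈ Metric.closedBall 0 (2 * L * ε)} :=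
            measure_biUnion_finset_le S _
        _ ≤ ∑ _s ∈ S, ENNReal.ofReal (M * ((2 * L * ε) ^ (n + 1) * b1)) :=
            Finset.sum_le_sum hballprob
        _ = (S.card : ENNReal) * ENNReal.ofReal (M * ((2 * L * ε) ^ (n + 1) * b1)) := by
            rw [Finset.sum_const, nsmul_eq_mul]
        _ = ENNReal.ofReal ((S.card : ℝ) * (M * ((2 * L * ε) ^ (n + 1) * b1))) := by
            rw [ENNReal.ofReal_mul (Nat.cast_nonneg S.card), ENNReal.ofReal_natCast]
        _ ≤ ENNReal.ofReal (c₀ * ε) := by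
            refine ENNReal.ofReal_le_ofReal ?_
            have hstep : (S.card : ℝ) * (M * ((2 * L * ε) ^ (n + 1) * b1)) ≤
                (v / ((ε / 4) ^ n * bn)) * (M * ((2 * L * ε) ^ (n + 1) * b1)) :=
              mul_le_mul_of_nonneg_right hcardR (by positivity)
            refine hstep.trans (le_of_eq ?_)
            exact no_zeros_aux_alg n v bn M (L : ℝ) b1 ε hbnpos.ne' hε.ne'
    -- from the key bound, the measure is zero
    refine le_antisymm ?_ zero_le
    refine ENNReal.le_of_forall_pos_le_add fun η hη _ => ?_
    rw [zero_add]
    set ε : ℝ := min (δ / 2) (min (r / (2 * L + 1)) ((η : ℝ) / (c₀ + 1))) with hεdef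
    have hεpos : 0 < ε := by
      refine lt_min (by positivity) (lt_min (by positivity) (by positivity))
    have h2Lε : 2 * L * ε < r := by
      have h1 : ε ≤ r / (2 * L + 1) := le_trans (min_le_right _ _) (min_le_left _ _)
      have h2 : ε * (2 * L + 1) ≤ r := (le_div_iff₀ (by positivity)).1 h1
      nlinarith [hεpos]
    calc ℙ (E L) ≤ ENNReal.ofReal (c₀ * ε) := key ε hεpos (min_le_left _ _) h2Lε
      _ ≤ ENNReal.ofReal (η : ℝ) := by
          refine ENNReal.ofReal_le_ofReal ?_
          have h1 : ε ≤ (η : ℝ) / (c₀ + 1) := le_trans (min_le_right _ _) (min_le_right _ _)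
          have h2 : c₀ * ε ≤ c₀ * ((η : ℝ) / (c₀ + 1)) := mul_le_mul_of_nonneg_left h1 hc₀
          have h3 : c₀ * ((η : ℝ) / (c₀ + 1)) ≤ (η : ℝ) := by
            rw [mul_div_assoc']
            rw [div_le_iff₀ (by positivity)]
            nlinarith [η.coe_nonneg]
          linarith
      _ = (η : ENNReal) := ENNReal.ofReal_coe_nnreal
  -- conclude
  rw [MeasureTheory.ae_iff] at hC1 ⊢
  have hsub : {ω | ¬ ∀ t ∈ K, Φ ω t ≠ 0} ⊆
      {ω | ¬ ContDiffOn ℝ 1 (Φ ω) U} ∪ ⋃ L, E L := by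
    intro ω hω
    by_cases hc : ContDiffOn ℝ 1 (Φ ω) U
    · right
      simp only [Set.mem_setOf_eq, not_forall] at hω
      obtain ⟨t, htK, ht⟩ := hω
      obtain ⟨C, hC⟩ := hTcomp.exists_bound_of_continuousOn
        ((hc.continuousOn_fderiv_of_isOpen hU le_rfl).mono hδU)
      refine Set.mem_iUnion.2 ⟨⌈C⌉₊, hc, fun x hx => (hC x hx).trans (Nat.le_ceil C), t, htK, ?_⟩
      simpa using ht
    · left; exact hc
  exact measure_mono_null hsub
    (measure_union_null hC1 (measure_iUnion_null hEzero))
end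

section
/- Let f : ℝ² → ℝ be a C³ function and define α(z) := sup_{t ≥ 0} τ_f(t,z) for z ∈ ℝ². Assume: (i) there exists a unique T ∈ [0,∞) such that α(0) = τ_f(T,0) > 0; (ii) if T > 0 then ∂²τ_f/∂t²(T,0) ≠ 0, while if T = 0 then ∂τ_f/∂t(0,0) ≠ 0 (partial derivatives in the t-variable of the C¹ extension of τ_f to t = 0); (iii) for every ε > 0 there exists C > 0 such that |τ_f(t,z)| ≤ ε for all z ∈ [-1,1]² and all t ≥ C. Then α is differentiable at 0 and ∇α(0) = τ_{∇f}(T,0), i.e., ∇α(0) = (∇f(T e₁) - ∇f(0))/T when T > 0 and ∇α(0) = ∂(∇f)/∂z₁(0) when T = 0. -/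
open Set

/-- The slope field `τ_g` of a function `g : ℝ² → ℝ`:
`τ_g (t, z) = (g (z + t e₁) - g z) / t` for `t > 0` and
`τ_g (0, z) = ∂g/∂z₁ (z)`, where `e₁` is the first canonical basis vector. -/
noncomputable def tauSlope (g : EuclideanSpace ℝ (Fin 2) → ℝ) (t : ℝ)
    (z : EuclideanSpace ℝ (Fin 2)) : ℝ :=
  if t = 0 then fderiv ℝ g z (EuclideanSpace.single (0 : Fin 2) (1 : ℝ))
  else (g (z + t • EuclideanSpace.single (0 : Fin 2) (1 : ℝ)) - g z) / t

/-- The slope field `τ_{∇g}` of the gradient of `g : ℝ² → ℝ`, as a continuous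
linear functional: `τ_{∇g} (t, 0) = (Dg (t e₁) - Dg 0) / t` for `t > 0` and
`τ_{∇g} (0, 0) = ∂(Dg)/∂z₁ (0)`. -/
noncomputable def tauGradAtZero (g : EuclideanSpace ℝ (Fin 2) → ℝ) (t : ℝ) :
    EuclideanSpace ℝ (Fin 2) →L[ℝ] ℝ :=
  if t = 0 then fderiv ℝ (fderiv ℝ g) 0 (EuclideanSpace.single (0 : Fin 2) (1 : ℝ))
  else t⁻¹ • (fderiv ℝ g (t • EuclideanSpace.single (0 : Fin 2) (1 : ℝ)) - fderiv ℝ g 0)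

noncomputable section AuxSlope

/-- abbreviation for the plane. -/
abbrev E2 : Type := EuclideanSpace ℝ (Fin 2)

/-- the first basis vector. -/
def e1 : E2 := EuclideanSpace.single (0 : Fin 2) (1 : ℝ)

/-- generic slope field of a function with values in a normed space. -/
def sl {F : Type*} [NormedAddCommGroup F] [NormedSpace ℝ F] (g : E2 → F) (t : ℝ) (z : E2) : F :=
  if t = 0 then fderiv ℝ g z e1 else t⁻¹ • (g (z + t • e1) - g z)

variable {F : Type*} [NormedAddCommGroup F] [NormedSpace ℝ F] [CompleteSpace F]

lemma slope_rep (g : E2 → F) (hg : ContDiff ℝ 1 g) (t : ℝ) (z : E2) :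
    sl g t z = ∫ s in (0:ℝ)..1, fderiv ℝ g (z + (s * t) • e1) e1 := by
  have hcont : Continuous fun y : E2 => fderiv ℝ g y e1 :=
    (hg.continuous_fderiv (by simp)).clm_apply continuous_const
  rcases eq_or_ne t 0 with ht | ht
  · subst ht
    simp [sl]
  · rw [sl, if_neg ht]
    have hderiv : ∀ u : ℝ, HasDerivAt (fun u : ℝ => g (z + u • e1))
        (fderiv ℝ g (z + u • e1) e1) u := by
      intro u
      have h1 : HasDerivAt (fun u : ℝ => z + u • e1) e1 u := by
        simpa using ((hasDerivAt_id u).smul_const e1).const_add z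
      exact ((hg.differentiable (by simp) (z + u • e1)).hasFDerivAt.comp_hasDerivAt u h1)
    have hFTC : (∫ u in (0:ℝ)..t, fderiv ℝ g (z + u • e1) e1)
        = g (z + t • e1) - g z := by
      have := intervalIntegral.integral_eq_sub_of_hasDerivAt
        (f := fun u : ℝ => g (z + u • e1)) (f' := fun u => fderiv ℝ g (z + u • e1) e1)
        (a := 0) (b := t) (fun x _ => hderiv x)
        ((hcont.comp (by continuity)).intervalIntegrable 0 t)
      simpa using this
    rw [intervalIntegral.integral_comp_mul_right (fun u => fderiv ℝ g (z + u • e1) e1) ht]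
    simp [hFTC]

lemma sl_cont (g : E2 → F) (hg : ContDiff ℝ 1 g) :
    Continuous fun p : ℝ × E2 => sl g p.1 p.2 := by
  have hcont : Continuous fun y : E2 => fderiv ℝ g y e1 :=
    (hg.continuous_fderiv (by simp)).clm_apply continuous_const
  have h2 : Continuous fun p : ℝ × E2 =>
      ∫ s in (0:ℝ)..1, fderiv ℝ g (p.2 + (s * p.1) • e1) e1 := by
    apply intervalIntegral.continuous_parametric_intervalIntegral_of_continuous'
    exact hcont.comp
      (Continuous.add continuous_fst.snd
        ((continuous_snd.mul continuous_fst.fst).smul continuous_const))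
  have hrep : (fun p : ℝ × E2 => sl g p.1 p.2)
      = fun p : ℝ × E2 => ∫ s in (0:ℝ)..1, fderiv ℝ g (p.2 + (s * p.1) • e1) e1 := by
    funext p; exact slope_rep g hg p.1 p.2
  rw [hrep]; exact h2

lemma sl_hasFDerivAt (f : E2 → ℝ) (hf : ContDiff ℝ 3 f) (t : ℝ) (z : E2) :
    HasFDerivAt (fun w => sl f t w) (sl (fderiv ℝ f) t z) z := by
  rcases eq_or_ne t 0 with ht | ht
  · subst ht
    simp only [sl, if_pos rfl]
    have hf2 : ContDiff ℝ 2 (fderiv ℝ f) := hf.fderiv_right (by norm_num)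
    have hAs : HasFDerivAt (fderiv ℝ f) (fderiv ℝ (fderiv ℝ f) z) z :=
      (hf2.differentiable (by norm_num) z).hasFDerivAt
    have hcomp := (ContinuousLinearMap.apply ℝ ℝ e1).hasFDerivAt.comp z hAs
    have heq : (ContinuousLinearMap.apply ℝ ℝ e1).comp (fderiv ℝ (fderiv ℝ f) z)
        = fderiv ℝ (fderiv ℝ f) z e1 := by
      ext w
      exact (hf.contDiffAt.isSymmSndFDerivAt (by norm_num) w e1)
    rw [heq] at hcomp
    exact hcomp
  · simp only [sl, if_neg ht]
    have h1 : HasFDerivAt (fun w => f (w + t • e1)) (fderiv ℝ f (z + t • e1)) z := by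
      have := ((hf.differentiable (by norm_num) (z + t • e1)).hasFDerivAt).comp z
        ((hasFDerivAt_id z).add_const (t • e1))
      exact this
    have h2 : HasFDerivAt f (fderiv ℝ f z) z := (hf.differentiable (by norm_num) z).hasFDerivAt
    exact (h1.sub h2).const_smul t⁻¹

lemma abs_coord_le_norm (z : E2) (i : Fin 2) : |z i| ≤ ‖z‖ := by
  have h := abs_real_inner_le_norm (EuclideanSpace.single i (1:ℝ)) z
  rw [EuclideanSpace.inner_single_left] at h
  simpa [EuclideanSpace.norm_single] using h

end AuxSlope

/-- **Differentiability of the shadow field `α` at a fixed point.**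
Let `f : ℝ² → ℝ` be `C³` and `α z = sup_{t ≥ 0} τ_f (t, z)`.  Suppose there is
a unique `T ≥ 0` with `α 0 = τ_f (T, 0) > 0`, that the natural non-degeneracy
condition holds at `T` (`∂²τ_f/∂t² (T,0) ≠ 0` if `T > 0`, `∂τ_f/∂t (0,0) ≠ 0`
if `T = 0`), and that `τ_f` decays uniformly at infinity on `[-1,1]²`.  Then
`α` is differentiable at `0` with `∇α(0) = τ_{∇f} (T, 0)`. -/
theorem alpha_differentiable_at_zero
    (f : EuclideanSpace ℝ (Fin 2) → ℝ) (hf : ContDiff ℝ 3 f)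
    (α : EuclideanSpace ℝ (Fin 2) → ℝ)
    (hα : ∀ z, α z = ⨆ t : Ici (0:ℝ), tauSlope f (↑t) z)
    (T : ℝ) (hT : 0 ≤ T)
    (hmax : α 0 = tauSlope f T 0)
    (hpos : 0 < tauSlope f T 0)
    (huniq : ∀ t : ℝ, 0 ≤ t → α 0 = tauSlope f t 0 → t = T)
    (hnd1 : 0 < T → deriv (deriv (fun t : ℝ => tauSlope f t 0)) T ≠ 0)
    (hnd2 : T = 0 → deriv (fun t : ℝ => tauSlope f t 0) 0 ≠ 0)
    (hdecay : ∀ ε > (0:ℝ), ∃ C > (0:ℝ), ∀ z : EuclideanSpace ℝ (Fin 2),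
      (∀ i, z i ∈ Icc (-1:ℝ) 1) → ∀ t ≥ C, |tauSlope f t z| ≤ ε) :
    HasFDerivAt α (tauGradAtZero f T) 0 := by
  clear hnd1 hnd2
  -- translate `tauSlope` into the generic slope `sl`
  have hsl_tau : ∀ t z, tauSlope f t z = sl f t z := by
    intro t z
    unfold tauSlope sl e1
    split
    · rfl
    · rw [smul_eq_mul, div_eq_inv_mul]
  have hA : tauGradAtZero f T = sl (fderiv ℝ f) T 0 := by
    unfold tauGradAtZero sl e1
    split <;> simp
  set A := tauGradAtZero f T with hAdef
  rw [hsl_tau] at hmax hpos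
  have huniq' : ∀ t : ℝ, 0 ≤ t → α 0 = sl f t 0 → t = T := by
    intro t ht h; exact huniq t ht (by rwa [hsl_tau])
  have hα' : ∀ z, α z = ⨆ t : Ici (0:ℝ), sl f (↑t) z := by
    intro z; rw [hα z]; exact iSup_congr fun t => hsl_tau _ _
  have hdecay' : ∀ ε > (0:ℝ), ∃ C > (0:ℝ), ∀ z : E2,
      (∀ i, z i ∈ Icc (-1:ℝ) 1) → ∀ t ≥ C, |sl f t z| ≤ ε := by
    intro ε hε
    obtain ⟨C, hC, h⟩ := hdecay ε hε
    exact ⟨C, hC, fun z hz t ht => by rw [← hsl_tau]; exact h z hz t ht⟩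
  clear hα hdecay huniq
  -- continuity of the slope fields
  have hf1 : ContDiff ℝ 1 f := hf.of_le (by norm_num)
  have hf2 : ContDiff ℝ 2 (fderiv ℝ f) := hf.fderiv_right (by norm_num)
  have τc : Continuous fun p : ℝ × E2 => sl f p.1 p.2 := sl_cont f hf1
  have Λc : Continuous fun p : ℝ × E2 => sl (fderiv ℝ f) p.1 p.2 :=
    sl_cont (fderiv ℝ f) (hf2.of_le (by norm_num))
  -- the decay bound with ε = (sl f T 0)/2
  obtain ⟨C₀, hC₀pos, hC₀⟩ := hdecay' (sl f T 0 / 2) (by positivity)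
  set C := max C₀ (T + 1) with hCdef
  have hTC : T ∈ Icc (0:ℝ) C := ⟨hT, le_trans (by linarith) (le_max_right _ _)⟩
  have hCpos : 0 < C := lt_of_lt_of_le hC₀pos (le_max_left _ _)
  -- existence of maximizers near 0
  have attain : ∀ z : E2, ‖z‖ ≤ 1 → sl f T 0 / 2 < sl f T z →
      ∃ t', t' ∈ Icc (0:ℝ) C ∧ (∀ t ≥ (0:ℝ), sl f t z ≤ sl f t' z) ∧ α z = sl f t' z := by
    intro z hz1 hzT
    have hcube : ∀ i, z i ∈ Icc (-1:ℝ) 1 := by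
      intro i
      have := abs_coord_le_norm z i
      constructor <;> [linarith [neg_abs_le (z i)]; linarith [le_abs_self (z i)]]
    obtain ⟨t', ht'mem, ht'max⟩ :=
      isCompact_Icc.exists_isMaxOn (⟨T, hTC⟩ : (Icc (0:ℝ) C).Nonempty)
        ((τc.comp (continuous_id.prodMk continuous_const : Continuous fun t : ℝ => ((t, z) : ℝ × E2))).continuousOn)
    have hub : ∀ t ≥ (0:ℝ), sl f t z ≤ sl f t' z := by
      intro t ht
      rcases le_or_gt t C with htC | htC
      · exact ht'max ⟨ht, htC⟩
      · have h1 : |sl f t z| ≤ sl f T 0 / 2 :=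
          hC₀ z hcube t (le_trans (le_max_left _ _) htC.le)
        have h2 : sl f T z ≤ sl f t' z := ht'max hTC
        calc sl f t z ≤ sl f T 0 / 2 := le_trans (le_abs_self _) h1
          _ ≤ sl f t' z := by linarith
    have hbdd : BddAbove (range fun t : Ici (0:ℝ) => sl f (↑t) z) := by
      refine ⟨sl f t' z, ?_⟩
      rintro _ ⟨⟨t, ht⟩, rfl⟩
      exact hub t ht
    refine ⟨t', ht'mem, hub, ?_⟩
    rw [hα' z]
    haveI : Nonempty (Ici (0:ℝ)) := ⟨⟨0, self_mem_Ici⟩⟩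
    refine le_antisymm ?_ ?_
    · exact ciSup_le fun t => hub t.1 t.2
    · exact le_ciSup hbdd ⟨t', ht'mem.1⟩
  -- the value at 0 : α 0 is an upper bound for all slopes at 0
  have h0 : ∀ t ≥ (0:ℝ), sl f t 0 ≤ α 0 := by
    obtain ⟨t₀, _, hub, hval⟩ := attain 0 (by simp) (by linarith)
    intro t ht
    rw [hval]
    exact hub t ht
  -- localization of the maximizer near T, for z near 0
  have key : ∀ δ > (0:ℝ), ∃ r > (0:ℝ), ∀ z : E2, ‖z‖ < r →
      ∃ t', 0 ≤ t' ∧ |t' - T| < δ ∧ α z = sl f t' z ∧ ∀ t ≥ (0:ℝ), sl f t z ≤ α z := by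
    intro δ hδ
    -- a radius ensuring `sl f T z` is close to `sl f T 0`
    have hTzcont : ∀ η > (0:ℝ), ∃ r₁ > (0:ℝ), ∀ z : E2, ‖z‖ < r₁ →
        |sl f T z - sl f T 0| < η := by
      intro η hη
      have hc : ContinuousAt (fun z : E2 => sl f T z) 0 :=
        (τc.comp (continuous_const.prodMk continuous_id : Continuous fun z : E2 => ((T, z) : ℝ × E2))).continuousAt
      rw [Metric.continuousAt_iff] at hc
      obtain ⟨r₁, hr₁, h⟩ := hc η hη
      exact ⟨r₁, hr₁, fun z hz => by
        have := h (by simpa [dist_eq_norm] using hz)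
        simpa [dist_eq_norm] using this⟩
    set S := {t : ℝ | t ∈ Icc (0:ℝ) C ∧ δ ≤ |t - T|} with hSdef
    by_cases hS : S.Nonempty
    · -- the maximum of `sl f · 0` on `S` is strictly below `α 0`
      have hScompact : IsCompact S := by
        apply isCompact_Icc.of_isClosed_subset
        · exact (isClosed_Icc.inter (isClosed_le continuous_const (continuous_id.sub continuous_const).abs))
        · exact fun t ht => ht.1
      obtain ⟨t₀, ht₀S, ht₀max⟩ := hScompact.exists_isMaxOn hS
        ((τc.comp (continuous_id.prodMk continuous_const : Continuous fun t : ℝ => ((t, (0:E2)) : ℝ × E2))).continuousOn)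
      have hm_lt : sl f t₀ 0 < α 0 := by
        rcases lt_or_eq_of_le (h0 t₀ ht₀S.1.1) with h | h
        · exact h
        · exfalso
          have := huniq' t₀ ht₀S.1.1 h.symm
          have := ht₀S.2
          rw [‹t₀ = T›] at this
          simp at this
          linarith
      set η := α 0 - sl f t₀ 0 with hηdef
      have hη : 0 < η := by linarith
      -- uniform continuity on the compact set `Icc 0 C ×ˢ Metric.closedBall 0 1`
      have hK : IsCompact (Icc (0:ℝ) C ×ˢ Metric.closedBall (0:E2) 1) :=
        isCompact_Icc.prod (isCompact_closedBall _ _)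
      have hUC := hK.uniformContinuousOn_of_continuous τc.continuousOn
      rw [Metric.uniformContinuousOn_iff] at hUC
      obtain ⟨r₀, hr₀, hUC⟩ := hUC (η / 2) (by linarith)
      obtain ⟨r₁, hr₁, hTz⟩ := hTzcont (min (η / 2) (sl f T 0 / 2)) (by positivity)
      refine ⟨min 1 (min r₀ r₁), by positivity, ?_⟩
      intro z hz
      have hz1 : ‖z‖ ≤ 1 := le_of_lt (lt_of_lt_of_le hz (min_le_left _ _))
      have hzr₀ : ‖z‖ < r₀ := lt_of_lt_of_le hz (le_trans (min_le_right _ _) (min_le_left _ _))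
      have hzr₁ : ‖z‖ < r₁ := lt_of_lt_of_le hz (le_trans (min_le_right _ _) (min_le_right _ _))
      have hTznear := hTz z hzr₁
      have hTzlarge : sl f T 0 / 2 < sl f T z := by
        have h1 : |sl f T z - sl f T 0| < sl f T 0 / 2 :=
          lt_of_lt_of_le hTznear (min_le_right _ _)
        have := abs_lt.mp h1
        linarith [this.1]
      obtain ⟨t', ht'mem, hub, hval⟩ := attain z hz1 hTzlarge
      refine ⟨t', ht'mem.1, ?_, hval, fun t ht => by rw [hval]; exact hub t ht⟩
      by_contra hcon
      push_neg at hcon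
      have ht'S : t' ∈ S := ⟨ht'mem, hcon⟩
      -- `α z = sl f t' z < sl f t' 0 + η/2 ≤ sl f t₀ 0 + η/2`
      have hclose : |sl f t' z - sl f t' 0| < η / 2 := by
        have hp : ((t', z) : ℝ × E2) ∈ Icc (0:ℝ) C ×ˢ Metric.closedBall (0:E2) 1 :=
          ⟨ht'mem, by simpa [Metric.mem_closedBall, dist_eq_norm] using hz1⟩
        have hq : ((t', (0:E2)) : ℝ × E2) ∈ Icc (0:ℝ) C ×ˢ Metric.closedBall (0:E2) 1 :=
          ⟨ht'mem, by simp⟩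
        have hd : dist ((t', z) : ℝ × E2) ((t', (0:E2)) : ℝ × E2) < r₀ := by
          rw [Prod.dist_eq]
          apply max_lt
          · simpa using hr₀
          · simpa [dist_eq_norm] using hzr₀
        have := hUC _ hp _ hq hd
        simpa [dist_eq_norm] using this
      have hup : α z < sl f t₀ 0 + η / 2 := by
        rw [hval]
        have h1 : sl f t' z < sl f t' 0 + η / 2 := by
          have := abs_lt.mp hclose
          linarith [this.1]
        have h2 : sl f t' 0 ≤ sl f t₀ 0 := ht₀max ht'S
        linarith
      have hlow : α 0 - η / 2 < α z := by
        have h1 : |sl f T z - sl f T 0| < η / 2 := lt_of_lt_of_le hTznear (min_le_left _ _)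
        have h2 := (abs_lt.mp h1).1
        have h3 : sl f T z ≤ α z := by
          rw [hval]; exact hub T hT
        rw [hmax]
        linarith
      rw [hηdef] at hup hlow
      linarith
    · -- `S` empty: every point of `Icc 0 C` is within `δ` of `T`
      obtain ⟨r₁, hr₁, hTz⟩ := hTzcont (sl f T 0 / 2) (by positivity)
      refine ⟨min 1 r₁, by positivity, ?_⟩
      intro z hz
      have hz1 : ‖z‖ ≤ 1 := le_of_lt (lt_of_lt_of_le hz (min_le_left _ _))
      have hzr₁ : ‖z‖ < r₁ := lt_of_lt_of_le hz (min_le_right _ _)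
      have hTzlarge : sl f T 0 / 2 < sl f T z := by
        have := abs_lt.mp (hTz z hzr₁)
        linarith [this.1]
      obtain ⟨t', ht'mem, hub, hval⟩ := attain z hz1 hTzlarge
      refine ⟨t', ht'mem.1, ?_, hval, fun t ht => by rw [hval]; exact hub t ht⟩
      by_contra hcon
      push_neg at hcon
      exact hS ⟨t', ht'mem, hcon⟩
  -- final assembly: Danskin sandwich
  rw [hasFDerivAt_iff_isLittleO_nhds_zero]
  simp only [zero_add]
  rw [Asymptotics.isLittleO_iff]
  intro c hc
  -- the derivative of `z ↦ sl f T z` at `0` is `A`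
  have hder : HasFDerivAt (fun w => sl f T w) A 0 := by
    rw [hA]
    exact sl_hasFDerivAt f hf T 0
  have hderlo := (hasFDerivAt_iff_isLittleO_nhds_zero.mp hder).def hc
  simp only [zero_add] at hderlo
  -- continuity of `Λ` at `(T, 0)`
  have hΛat : ∃ δ₁ > (0:ℝ), ∀ t : ℝ, ∀ w : E2, |t - T| < δ₁ → ‖w‖ < δ₁ →
      ‖sl (fderiv ℝ f) t w - sl (fderiv ℝ f) T 0‖ ≤ c := by
    have hc' : ContinuousAt (fun p : ℝ × E2 => sl (fderiv ℝ f) p.1 p.2) (T, 0) := Λc.continuousAt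
    rw [Metric.continuousAt_iff] at hc'
    obtain ⟨δ₁, hδ₁, h⟩ := hc' c hc
    refine ⟨δ₁, hδ₁, fun t w ht hw => ?_⟩
    have hd : dist ((t, w) : ℝ × E2) ((T, (0:E2)) : ℝ × E2) < δ₁ := by
      rw [Prod.dist_eq]
      apply max_lt
      · simpa [Real.dist_eq] using ht
      · simpa [dist_eq_norm] using hw
    have := h hd
    rw [dist_eq_norm] at this
    exact this.le
  obtain ⟨δ₁, hδ₁, hΛ⟩ := hΛat
  obtain ⟨r, hr, hkey⟩ := key δ₁ hδ₁
  have hball : Metric.ball (0:E2) (min r (δ₁ / 2)) ∈ nhds (0:E2) :=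
    Metric.ball_mem_nhds 0 (by positivity)
  filter_upwards [hball, hderlo] with z hzball hzlo
  rw [Metric.mem_ball, dist_eq_norm, sub_zero] at hzball
  have hzr : ‖z‖ < r := lt_of_lt_of_le hzball (min_le_left _ _)
  have hzδ : ‖z‖ ≤ δ₁ / 2 := le_of_lt (lt_of_lt_of_le hzball (min_le_right _ _))
  obtain ⟨t', ht'0, ht'near, hval, hbd⟩ := hkey z hzr
  -- lower bound
  have hlower : -(c * ‖z‖) ≤ α z - α 0 - A z := by
    have h1 : sl f T z ≤ α z := hbd T hT
    have h2 : ‖sl f T z - sl f T 0 - A z‖ ≤ c * ‖z‖ := hzlo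
    rw [Real.norm_eq_abs] at h2
    have := (abs_le.mp h2).1
    rw [hmax]
    linarith
  -- upper bound via the mean value inequality
  have hupper : α z - α 0 - A z ≤ c * ‖z‖ := by
    have hmean : ‖(sl f t' z - A z) - (sl f t' 0 - A 0)‖ ≤ c * ‖z - 0‖ := by
      apply Convex.norm_image_sub_le_of_norm_hasFDerivWithin_le
        (f := fun w => sl f t' w - A w)
        (f' := fun w => sl (fderiv ℝ f) t' w - A)
        (s := Metric.closedBall (0:E2) (δ₁ / 2))
      · intro w hw
        exact ((sl_hasFDerivAt f hf t' w).sub (A.hasFDerivAt)).hasFDerivWithinAt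
      · intro w hw
        rw [Metric.mem_closedBall, dist_eq_norm, sub_zero] at hw
        rw [hA]
        exact hΛ t' w ht'near (lt_of_le_of_lt hw (by linarith))
      · exact convex_closedBall _ _
      · simp; positivity
      · rw [Metric.mem_closedBall, dist_eq_norm, sub_zero]; exact hzδ
    rw [map_zero, sub_zero, sub_zero, Real.norm_eq_abs] at hmean
    have h2 := (abs_le.mp hmean).2
    have h3 : sl f t' 0 ≤ α 0 := h0 t' ht'0
    rw [hval]
    linarith
  rw [Real.norm_eq_abs, abs_le]
  exact ⟨hlower, hupper⟩
end
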